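/- Let B be a Hopf algebra, L a normalized commuting 2-cocycle and σ = L∘(id⊗S)∘Δ. Then ∂σ = L + L∘(S⊗S)∘τ, where ∂σ(a⊗b) = δ(a)σ(b) − σ(ab) + σ(a)δ(b). -/

import Mathlib

open TensorProduct Coalgebra

variable {B : Type} [Ring B] [HopfAlgebra ℂ B]

/-- The comultiplication `Λ = (id ⊗ τ ⊗ id) ∘ (Δ ⊗ Δ)` of `B ⊗ B`. -/
noncomputable def Lam : B ⊗[ℂ] B →ₗ[ℂ] (B ⊗[ℂ] B) ⊗[ℂ] (B ⊗[ℂ] B) :=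
  (TensorProduct.tensorTensorTensorComm ℂ B B B B).toLinearMap ∘ₗ
    TensorProduct.map (comul (R := ℂ)) (comul (R := ℂ))

/-- Convolution of linear functionals w.r.t. a given comultiplication. -/
noncomputable def convWith {M : Type} [AddCommGroup M] [Module ℂ M]
    (Δ : M →ₗ[ℂ] M ⊗[ℂ] M) (φ ψ : M →ₗ[ℂ] ℂ) : M →ₗ[ℂ] ℂ :=
  LinearMap.mul' ℂ ℂ ∘ₗ TensorProduct.map φ ψ ∘ₗ Δ

/-- Convolution powers `φ^{⋆n}` w.r.t. a comultiplication `Δ` and counit `ε` (the 0-th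
power being the counit). -/
noncomputable def convPowWith {M : Type} [AddCommGroup M] [Module ℂ M]
    (Δ : M →ₗ[ℂ] M ⊗[ℂ] M) (ε : M →ₗ[ℂ] ℂ) (φ : M →ₗ[ℂ] ℂ) : ℕ → (M →ₗ[ℂ] ℂ)
  | 0 => ε
  | n + 1 => convWith Δ φ (convPowWith Δ ε φ n)

/-- The counit `δ ⊗ δ` of `B ⊗ B`. -/
noncomputable def counit2 : B ⊗[ℂ] B →ₗ[ℂ] ℂ :=
  LinearMap.mul' ℂ ℂ ∘ₗ TensorProduct.map (counit (R := ℂ)) (counit (R := ℂ))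

/-- `L ⋆ μ = (L ⊗ μ) ∘ Λ : B ⊗ B → B`. -/
noncomputable def LconvMu (L : B ⊗[ℂ] B →ₗ[ℂ] ℂ) : B ⊗[ℂ] B →ₗ[ℂ] B :=
  (TensorProduct.lid ℂ B).toLinearMap ∘ₗ TensorProduct.map L (LinearMap.mul' ℂ B) ∘ₗ Lam

/-- `μ ⋆ L = (μ ⊗ L) ∘ Λ : B ⊗ B → B`. -/
noncomputable def MuConvL (L : B ⊗[ℂ] B →ₗ[ℂ] ℂ) : B ⊗[ℂ] B →ₗ[ℂ] B :=
  (TensorProduct.rid ℂ B).toLinearMap ∘ₗ TensorProduct.map (LinearMap.mul' ℂ B) L ∘ₗ Lam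

/-- `σ = L ∘ (id ⊗ S) ∘ Δ : B → ℂ`. -/
noncomputable def sigma (L : B ⊗[ℂ] B →ₗ[ℂ] ℂ) : B →ₗ[ℂ] ℂ :=
  L ∘ₗ TensorProduct.map LinearMap.id (HopfAlgebra.antipode (R := ℂ)) ∘ₗ comul (R := ℂ)

/-! Write `Δa = a₁ ⊗ a₂`, `Δb = b₁ ⊗ b₂`. Since `S` is an antialgebra map,
`σ(ab) = L(a₁b₁ ⊗ S(b₂)S(a₂))`, and the cocycle identity at `(a₁, b₁, S(b₂)S(a₂))` turns this
into `L(b₁ ⊗ S(b₂)S(a)) + δ(b)σ(a) - L(a ⊗ b)`. The cocycle identity at `(b₁, S(b₂), S(a))`,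
together with `b₁S(b₂) = δ(b)1` and `L(1 ⊗ ·) = 0`, evaluates the first term as
`σ(b)δ(a) - L(S(b) ⊗ S(a))`. -/

open HopfAlgebra

section TwoCocycle

variable {R A : Type*} [CommRing R] [Ring A] [Bialgebra R A]

def IsTwoCocycle (L : A ⊗[R] A →ₗ[R] R) : Prop :=
  ∀ a b c : A, counit (R := R) a * L (b ⊗ₜ[R] c) - L ((a * b) ⊗ₜ[R] c)
    + L (a ⊗ₜ[R] (b * c)) - L (a ⊗ₜ[R] b) * counit (R := R) c = 0

theorem IsTwoCocycle.apply_one_tmul {L : A ⊗[R] A →ₗ[R] R} (hL : IsTwoCocycle L)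
    (hnorm : L (1 ⊗ₜ[R] 1) = 0) (c : A) : L (1 ⊗ₜ[R] c) = 0 := by
  have h := hL 1 1 c
  simp only [Bialgebra.counit_one, one_mul, mul_one] at h
  linear_combination h + counit (R := R) c * hnorm

end TwoCocycle

namespace Coalgebra

variable {R A ι : Type*} [CommSemiring R] [AddCommMonoid A] [Module R A] [Coalgebra R A]

theorem sum_counit_mul_apply {a : A} (r : Repr R a ι) (φ : A →ₗ[R] R) :
    ∑ i ∈ r.index, counit (R := R) (r.left i) * φ (r.right i) = φ a := by
  simpa only [map_sum, LinearMap.lTensor_tmul, LinearMap.mul'_apply, one_mul]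
    using congr(LinearMap.mul' R R (φ.lTensor R $(sum_counit_tmul_eq r)))

theorem sum_apply_mul_counit {a : A} (r : Repr R a ι) (φ : A →ₗ[R] R) :
    ∑ i ∈ r.index, φ (r.left i) * counit (R := R) (r.right i) = φ a := by
  simpa only [map_sum, LinearMap.rTensor_tmul, LinearMap.mul'_apply, mul_one]
    using congr(LinearMap.mul' R R (φ.rTensor R $(sum_tmul_counit_eq r)))

end Coalgebra

local notation "ε" => counit (R := ℂ)

theorem sigma_eq_sum (L : B ⊗[ℂ] B →ₗ[ℂ] ℂ) {ι : Type*} {x : B} (r : Repr ℂ x ι) :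
    sigma L x = ∑ i ∈ r.index, L (r.left i ⊗ₜ antipode ℂ (r.right i)) := by
  simp only [sigma, LinearMap.comp_apply, ← r.eq, map_sum, map_tmul, LinearMap.id_apply]

theorem sigma_mul_eq_sum (L : B ⊗[ℂ] B →ₗ[ℂ] ℂ) {ι κ : Type*} {a b : B}
    (ra : Repr ℂ a ι) (rb : Repr ℂ b κ) :
    sigma L (a * b) = ∑ i ∈ ra.index, ∑ j ∈ rb.index,
      L ((ra.left i * rb.left j) ⊗ₜ (antipode ℂ (rb.right j) * antipode ℂ (ra.right i))) := by
  simp [sigma_eq_sum L (ra.mul rb), Finset.sum_product, antipode_mul_antidistrib]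

namespace IsTwoCocycle

variable {L : B ⊗[ℂ] B →ₗ[ℂ] ℂ}

theorem sum_apply_tmul_antipode_mul (hL : IsTwoCocycle L) (hnorm : L (1 ⊗ₜ 1) = 0)
    {ι : Type*} {b : B} (r : Repr ℂ b ι) (c : B) :
    ∑ j ∈ r.index, L (r.left j ⊗ₜ (antipode ℂ (r.right j) * c))
      = sigma L b * ε c - L (antipode ℂ b ⊗ₜ c) := by
  have hsplit : ∀ j, L (r.left j ⊗ₜ (antipode ℂ (r.right j) * c))
      = L ((r.left j * antipode ℂ (r.right j)) ⊗ₜ c)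
        - ε (r.left j) * L (antipode ℂ (r.right j) ⊗ₜ c)
        + L (r.left j ⊗ₜ antipode ℂ (r.right j)) * ε c :=
    fun j => by linear_combination hL (r.left j) (antipode ℂ (r.right j)) c
  have h1 : ∑ j ∈ r.index, L ((r.left j * antipode ℂ (r.right j)) ⊗ₜ c) = 0 := by
    rw [← map_sum, ← sum_tmul, sum_mul_antipode_eq_smul, ← smul_tmul', map_smul,
      hL.apply_one_tmul hnorm, smul_zero]
  have h2 : ∑ j ∈ r.index, ε (r.left j) * L (antipode ℂ (r.right j) ⊗ₜ c)
      = L (antipode ℂ b ⊗ₜ c) :=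
    sum_counit_mul_apply r (L ∘ₗ (mk ℂ B B).flip c ∘ₗ antipode ℂ)
  simp only [hsplit, Finset.sum_add_distrib, Finset.sum_sub_distrib, h1, h2, ← Finset.sum_mul,
    ← sigma_eq_sum]
  ring

theorem sigma_mul (hL : IsTwoCocycle L) {ι κ : Type*} {a b : B}
    (ra : Repr ℂ a ι) (rb : Repr ℂ b κ) :
    sigma L (a * b) = ∑ j ∈ rb.index, L (rb.left j ⊗ₜ (antipode ℂ (rb.right j) * antipode ℂ a))
      + ε b * sigma L a - L (a ⊗ₜ b) := by
  rw [sigma_mul_eq_sum L ra rb]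
  set S := antipode ℂ (A := B)
  have hsplit : ∀ i j, L ((ra.left i * rb.left j) ⊗ₜ (S (rb.right j) * S (ra.right i)))
      = ε (ra.left i) * L (rb.left j ⊗ₜ (S (rb.right j) * S (ra.right i)))
        + L (ra.left i ⊗ₜ (rb.left j * S (rb.right j) * S (ra.right i)))
        - L (ra.left i ⊗ₜ rb.left j) * ε (rb.right j) * ε (ra.right i) := fun i j => by
    have h := hL (ra.left i) (rb.left j) (S (rb.right j) * S (ra.right i))
    rw [Bialgebra.counit_mul, counit_antipode, counit_antipode, ← mul_assoc] at h
    linear_combination -h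
  have h1 : ∑ i ∈ ra.index, ∑ j ∈ rb.index,
      ε (ra.left i) * L (rb.left j ⊗ₜ (S (rb.right j) * S (ra.right i)))
      = ∑ j ∈ rb.index, L (rb.left j ⊗ₜ (S (rb.right j) * S a)) := by
    rw [Finset.sum_comm]
    exact Finset.sum_congr rfl fun j _ => sum_counit_mul_apply ra
      (L ∘ₗ mk ℂ B B (rb.left j) ∘ₗ LinearMap.mulLeft ℂ (S (rb.right j)) ∘ₗ S)
  have h2 : ∑ i ∈ ra.index, ∑ j ∈ rb.index,
      L (ra.left i ⊗ₜ (rb.left j * S (rb.right j) * S (ra.right i))) = ε b * sigma L a := by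
    have inner : ∀ x y : B, ∑ j ∈ rb.index, L (x ⊗ₜ (rb.left j * S (rb.right j) * y))
        = ε b * L (x ⊗ₜ y) := fun x y => by
      rw [← map_sum, ← tmul_sum, ← Finset.sum_mul, sum_mul_antipode_eq_smul, smul_mul_assoc,
        one_mul, tmul_smul, map_smul, smul_eq_mul]
    simp_rw [inner]
    rw [← Finset.mul_sum, sigma_eq_sum L ra]
  have h3 : ∑ i ∈ ra.index, ∑ j ∈ rb.index,
      L (ra.left i ⊗ₜ rb.left j) * ε (rb.right j) * ε (ra.right i) = L (a ⊗ₜ b) := by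
    simp_rw [← Finset.sum_mul]
    calc _ = ∑ i ∈ ra.index, L (ra.left i ⊗ₜ b) * ε (ra.right i) :=
          Finset.sum_congr rfl fun i _ => congrArg (· * _)
            (sum_apply_mul_counit rb (L ∘ₗ mk ℂ B B (ra.left i)))
      _ = L (a ⊗ₜ b) := sum_apply_mul_counit ra (L ∘ₗ (mk ℂ B B).flip b)
  simp only [hsplit, Finset.sum_add_distrib, Finset.sum_sub_distrib, h1, h2, h3]

end IsTwoCocycle

theorem stmt17_general (L : B ⊗[ℂ] B →ₗ[ℂ] ℂ)
    (hnorm : L (1 ⊗ₜ[ℂ] 1) = 0)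
    (hcocycle : ∀ a b c : B,
      counit (R := ℂ) a * L (b ⊗ₜ[ℂ] c) - L ((a * b) ⊗ₜ[ℂ] c)
        + L (a ⊗ₜ[ℂ] (b * c)) - L (a ⊗ₜ[ℂ] b) * counit (R := ℂ) c = 0) :
    ∀ a b : B,
      counit (R := ℂ) a * sigma L b - sigma L (a * b) + sigma L a * counit (R := ℂ) b
        = L (a ⊗ₜ[ℂ] b)
          + L ((HopfAlgebra.antipode (R := ℂ) b) ⊗ₜ[ℂ] (HopfAlgebra.antipode (R := ℂ) a)) := by
  intro a b
  rw [IsTwoCocycle.sigma_mul hcocycle (ℛ ℂ a) (ℛ ℂ b),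
    IsTwoCocycle.sum_apply_tmul_antipode_mul hcocycle hnorm, counit_antipode]
  ring

/-- Let `B` be a Hopf algebra, `L` a normalized commuting 2-cocycle and
`σ = L ∘ (id ⊗ S) ∘ Δ`.  Then `∂σ = L + L ∘ (S ⊗ S) ∘ τ`, where
`∂σ(a ⊗ b) = δ(a)σ(b) − σ(ab) + σ(a)δ(b)`. -/
theorem stmt17 (L : B ⊗[ℂ] B →ₗ[ℂ] ℂ)
    (hnorm : L (1 ⊗ₜ[ℂ] 1) = 0)
    (hcomm : LconvMu L = MuConvL L)
    (hcocycle : ∀ a b c : B,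
      counit (R := ℂ) a * L (b ⊗ₜ[ℂ] c) - L ((a * b) ⊗ₜ[ℂ] c)
        + L (a ⊗ₜ[ℂ] (b * c)) - L (a ⊗ₜ[ℂ] b) * counit (R := ℂ) c = 0) :
    ∀ a b : B,
      counit (R := ℂ) a * sigma L b - sigma L (a * b) + sigma L a * counit (R := ℂ) b
        = L (a ⊗ₜ[ℂ] b)
          + L ((HopfAlgebra.antipode (R := ℂ) b) ⊗ₜ[ℂ] (HopfAlgebra.antipode (R := ℂ) a)) :=
  stmt17_general L hnorm hcocycle
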